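/- arXiv:1705.09055 — 8 statements merged into one kernel-verified Lean document; each statement's English description precedes it below -/
import Mathlib

section
/- Let FNR, FPR ∈ [0,1] with FNR ≠ 1, and define DI = FPR/(1 - FNR) and, for c ∈ (0,1), CS_bal(c) = (1-c)·FNR + c·FPR. Then for any τ ∈ [0,1], with c = 1/(1+τ), we have DI ≥ τ if and only if CS_bal(c) ≥ 1 - c. -/
theorem stmt_0 (FNR FPR τ : ℝ)
    (hFNR : FNR ∈ Set.Icc (0:ℝ) 1) (hFPR : FPR ∈ Set.Icc (0:ℝ) 1)
    (hFNR1 : FNR ≠ 1) (hτ : τ ∈ Set.Icc (0:ℝ) 1) :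
    FPR / (1 - FNR) ≥ τ ↔
      (1 - 1 / (1 + τ)) * FNR + (1 / (1 + τ)) * FPR ≥ 1 - 1 / (1 + τ) := by
  obtain ⟨hτ0, hτ1⟩ := hτ
  have h1 : (0:ℝ) < 1 - FNR := lt_of_le_of_ne (by linarith [hFNR.2]) (fun h => hFNR1 (by linarith))
  have h2 : (0:ℝ) < 1 + τ := by linarith
  have hx : (1 / (1 + τ)) * (1 + τ) = 1 := one_div_mul_cancel h2.ne'
  have hxpos : (0:ℝ) < 1 / (1 + τ) := by positivity
  rw [ge_iff_le, le_div_iff₀ h1, ge_iff_le]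
  constructor <;> intro h <;>
    nlinarith [mul_le_mul_of_nonneg_left h hxpos.le, mul_pos hxpos h1]
end

section
/- Let FNR, FPR ∈ [0,1] with FNR ≠ 1, and define the symmetrised disparate impact as min(FPR/(1-FNR), (1-FPR)/FNR) (where FNR ≠ 0 as well). Then for any τ ∈ [0,1], with c = 1/(1+τ), the symmetrised disparate impact is ≥ τ if and only if (1-c)·FNR + c·FPR lies in the interval [1-c, c]. -/
theorem stmt_3 (FNR FPR τ : ℝ)
    (hFNR : FNR ∈ Set.Ioo (0:ℝ) 1) (hFPR : FPR ∈ Set.Ioo (0:ℝ) 1)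
    (hτ : τ ∈ Set.Icc (0:ℝ) 1) :
    min (FPR / (1 - FNR)) ((1 - FPR) / FNR) ≥ τ ↔
      (1 - 1 / (1 + τ)) * FNR + (1 / (1 + τ)) * FPR ∈
        Set.Icc (1 - 1 / (1 + τ)) (1 / (1 + τ)) := by
  obtain ⟨h1, h2⟩ := hFNR
  obtain ⟨h3, h4⟩ := hFPR
  obtain ⟨h5, h6⟩ := hτ
  have hpos : (0:ℝ) < 1 + τ := by linarith
  have hc : (1 / (1 + τ)) * (1 + τ) = 1 := by field_simp
  rw [ge_iff_le, le_min_iff, Set.mem_Icc,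
    le_div_iff₀ (by linarith : (0:ℝ) < 1 - FNR), le_div_iff₀ h1]
  constructor <;> intro h <;> obtain ⟨ha, hb⟩ := h <;> constructor <;> nlinarith
end

section
/- Let X be a measurable space with probability measure M, let η, η̄: X → [0,1] be measurable, c, c̄ ∈ [0,1], λ ∈ ℝ. Define R_full(f) = E[(c - η(X))·f(X)] - λ·E[(c̄ - η̄(X))·f(X)] for measurable f: X → [0,1], and s*(x) = η(x) - c - λ·(η̄(x) - c̄). Then any f* satisfying f*(x) = 1 whenever s*(x) > 0 and f*(x) = 0 whenever s*(x) < 0 minimises R_full over all measurable f: X → [0,1]. -/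
open MeasureTheory

lemma stmt8_aux {X : Type*} [MeasurableSpace X] (μ : Measure X) [IsProbabilityMeasure μ]
    {g : X → ℝ} (hg : Measurable g) {C : ℝ} (hC : ∀ x, |g x| ≤ C) : Integrable g μ :=
  (integrable_const C).mono' hg.aestronglyMeasurable (Filter.Eventually.of_forall hC)

theorem stmt_8 {X : Type*} [MeasurableSpace X] (μ : Measure X) [IsProbabilityMeasure μ]
    (η ηbar : X → ℝ) (c cbar lam : ℝ)
    (hη : Measurable η) (hηb : ∀ x, η x ∈ Set.Icc (0:ℝ) 1)
    (hηbar : Measurable ηbar) (hηbarb : ∀ x, ηbar x ∈ Set.Icc (0:ℝ) 1)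
    (hc : c ∈ Set.Icc (0:ℝ) 1) (hcbar : cbar ∈ Set.Icc (0:ℝ) 1)
    (fstar : X → ℝ) (hfstar : Measurable fstar) (hfstarb : ∀ x, fstar x ∈ Set.Icc (0:ℝ) 1)
    (hthr1 : ∀ x, η x - c - lam * (ηbar x - cbar) > 0 → fstar x = 1)
    (hthr0 : ∀ x, η x - c - lam * (ηbar x - cbar) < 0 → fstar x = 0) :
    ∀ f : X → ℝ, Measurable f → (∀ x, f x ∈ Set.Icc (0:ℝ) 1) →
      (∫ x, (c - η x) * fstar x ∂μ) - lam * ∫ x, (cbar - ηbar x) * fstar x ∂μ ≤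
        (∫ x, (c - η x) * f x ∂μ) - lam * ∫ x, (cbar - ηbar x) * f x ∂μ := by
  intro f hf hfb
  have bound : ∀ (a b : X → ℝ), (∀ x, a x ∈ Set.Icc (0:ℝ) 1) → (∀ x, b x ∈ Set.Icc (0:ℝ) 1) →
      ∀ e : ℝ, e ∈ Set.Icc (0:ℝ) 1 → ∀ x, |(e - a x) * b x| ≤ 1 := by
    intro a b ha hb e he x
    have h1 := ha x; have h2 := hb x
    rw [abs_mul]
    have : |e - a x| ≤ 1 := by
      rw [abs_le]; constructor <;> [nlinarith [he.1, he.2, h1.1, h1.2]; nlinarith [he.1, he.2, h1.1, h1.2]]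
    have : |b x| ≤ 1 := by rw [abs_le]; exact ⟨by linarith [h2.1], h2.2⟩
    nlinarith [abs_nonneg (e - a x), abs_nonneg (b x)]
  have I1 : Integrable (fun x => (c - η x) * fstar x) μ :=
    stmt8_aux μ ((measurable_const.sub hη).mul hfstar) (bound η fstar hηb hfstarb c hc)
  have I2 : Integrable (fun x => (cbar - ηbar x) * fstar x) μ :=
    stmt8_aux μ ((measurable_const.sub hηbar).mul hfstar) (bound ηbar fstar hηbarb hfstarb cbar hcbar)
  have I3 : Integrable (fun x => (c - η x) * f x) μ :=
    stmt8_aux μ ((measurable_const.sub hη).mul hf) (bound η f hηb hfb c hc)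
  have I4 : Integrable (fun x => (cbar - ηbar x) * f x) μ :=
    stmt8_aux μ ((measurable_const.sub hηbar).mul hf) (bound ηbar f hηbarb hfb cbar hcbar)
  have e1 : (∫ x, (c - η x) * fstar x ∂μ) - lam * ∫ x, (cbar - ηbar x) * fstar x ∂μ
      = ∫ x, ((c - η x) * fstar x - lam * ((cbar - ηbar x) * fstar x)) ∂μ := by
    rw [integral_sub I1 (I2.const_mul lam), integral_const_mul]
  have e2 : (∫ x, (c - η x) * f x ∂μ) - lam * ∫ x, (cbar - ηbar x) * f x ∂μ
      = ∫ x, ((c - η x) * f x - lam * ((cbar - ηbar x) * f x)) ∂μ := by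
    rw [integral_sub I3 (I4.const_mul lam), integral_const_mul]
  rw [e1, e2]
  refine integral_mono (I1.sub (I2.const_mul lam)) (I3.sub (I4.const_mul lam)) ?_
  intro x
  have key : (c - η x) * fstar x - lam * ((cbar - ηbar x) * fstar x)
      = -(η x - c - lam * (ηbar x - cbar)) * fstar x := by ring
  have key2 : (c - η x) * f x - lam * ((cbar - ηbar x) * f x)
      = -(η x - c - lam * (ηbar x - cbar)) * f x := by ring
  simp only [key, key2]
  set s := η x - c - lam * (ηbar x - cbar) with hs
  rcases lt_trichotomy s 0 with h | h | h
  · rw [hthr0 x h]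
    have := (hfb x).1
    nlinarith
  · simp [← hs, h]
  · rw [hthr1 x h]
    have := (hfb x).2
    nlinarith
end

section
/- Let X be a measurable space with probability measure M, η, η̄_EO: X → [0,1] measurable, π = E[η(X)] > 0, c, c̄ ∈ [0,1], λ ∈ ℝ. Define R_full(f) = E[(c - η(X))·f(X)] - λ·E[(η(X)/π)·(c̄ - η̄_EO(X))·f(X)] and s*(x) = (1 - λ·π^{-1}·(η̄_EO(x) - c̄))·η(x) - c. Then any f* with f*(x) = 1 whenever s*(x) > 0 and f*(x) = 0 whenever s*(x) < 0 minimises R_full over measurable f: X → [0,1]. -/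
open MeasureTheory

lemma integrable_of_bdd {X : Type*} [MeasurableSpace X] (μ : Measure X) [IsProbabilityMeasure μ]
    (h : X → ℝ) (hm : Measurable h) (C : ℝ) (hb : ∀ x, ‖h x‖ ≤ C) : Integrable h μ :=
  (integrable_const C).mono' hm.aestronglyMeasurable (ae_of_all _ hb)

theorem stmt_9 {X : Type*} [MeasurableSpace X] (μ : Measure X) [IsProbabilityMeasure μ]
    (η ηEO : X → ℝ) (c cbar lam : ℝ)
    (hη : Measurable η) (hηb : ∀ x, η x ∈ Set.Icc (0:ℝ) 1)
    (hηEO : Measurable ηEO) (hηEOb : ∀ x, ηEO x ∈ Set.Icc (0:ℝ) 1)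
    (hπ : (∫ x, η x ∂μ) > 0)
    (hc : c ∈ Set.Icc (0:ℝ) 1) (hcbar : cbar ∈ Set.Icc (0:ℝ) 1)
    (fstar : X → ℝ) (hfstar : Measurable fstar) (hfstarb : ∀ x, fstar x ∈ Set.Icc (0:ℝ) 1)
    (hthr1 : ∀ x, (1 - lam * (∫ y, η y ∂μ)⁻¹ * (ηEO x - cbar)) * η x - c > 0 → fstar x = 1)
    (hthr0 : ∀ x, (1 - lam * (∫ y, η y ∂μ)⁻¹ * (ηEO x - cbar)) * η x - c < 0 → fstar x = 0) :
    ∀ f : X → ℝ, Measurable f → (∀ x, f x ∈ Set.Icc (0:ℝ) 1) →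
      (∫ x, (c - η x) * fstar x ∂μ)
          - lam * ∫ x, (η x / (∫ y, η y ∂μ)) * (cbar - ηEO x) * fstar x ∂μ ≤
        (∫ x, (c - η x) * f x ∂μ)
          - lam * ∫ x, (η x / (∫ y, η y ∂μ)) * (cbar - ηEO x) * f x ∂μ := by
  intro f hf hfb
  set π : ℝ := ∫ x, η x ∂μ with hπdef
  set g : X → ℝ := fun x => (c - η x) - lam * ((η x / π) * (cbar - ηEO x)) with hg
  have hgm : Measurable g := by
    apply Measurable.sub
    · exact (measurable_const.sub hη)
    · exact measurable_const.mul (((hη.div_const π).mul (measurable_const.sub hηEO)))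
  -- bounds helpers
  have habs : ∀ (h : X → ℝ), (∀ x, h x ∈ Set.Icc (0:ℝ) 1) → ∀ x, |h x| ≤ 1 := by
    intro h hb x
    rcases hb x with ⟨h0, h1⟩
    rw [abs_le]; constructor <;> linarith
  have hgb : ∀ x, ‖g x‖ ≤ 1 + |lam| * π⁻¹ := by
    intro x
    have h1 : |c - η x| ≤ 1 := by
      rcases hc with ⟨hc0, hc1⟩; rcases hηb x with ⟨h0, h1⟩
      rw [abs_le]; constructor <;> linarith
    have h2 : |η x / π| ≤ π⁻¹ := by
      rw [abs_div, abs_of_pos hπ, div_le_iff₀ hπ]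
      rcases hηb x with ⟨h0, h1⟩
      rw [abs_of_nonneg h0, inv_mul_cancel₀ (ne_of_gt hπ)]; exact h1
    have h3 : |cbar - ηEO x| ≤ 1 := by
      rcases hcbar with ⟨hc0, hc1⟩; rcases hηEOb x with ⟨h0, h1⟩
      rw [abs_le]; constructor <;> linarith
    calc ‖g x‖ ≤ |c - η x| + |lam * ((η x / π) * (cbar - ηEO x))| := abs_sub _ _
      _ ≤ 1 + |lam| * π⁻¹ := by
          rw [abs_mul, abs_mul]
          have : |η x / π| * |cbar - ηEO x| ≤ π⁻¹ * 1 :=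
            mul_le_mul h2 h3 (abs_nonneg _) (by positivity)
          nlinarith [abs_nonneg lam]
  have key : ∀ (h : X → ℝ), Measurable h → (∀ x, h x ∈ Set.Icc (0:ℝ) 1) →
      Integrable (fun x => g x * h x) μ := by
    intro h hm hb
    apply integrable_of_bdd μ _ (hgm.mul hm) (1 + |lam| * π⁻¹)
    intro x
    calc ‖g x * h x‖ = ‖g x‖ * |h x| := by rw [norm_mul]; rfl
      _ ≤ (1 + |lam| * π⁻¹) * 1 := by
          apply mul_le_mul (hgb x) (habs h hb x) (abs_nonneg _)
          have : (0:ℝ) ≤ |lam| * π⁻¹ := by positivity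
          linarith
      _ = 1 + |lam| * π⁻¹ := mul_one _
  have kint1 : ∀ (h : X → ℝ), Measurable h → (∀ x, h x ∈ Set.Icc (0:ℝ) 1) →
      Integrable (fun x => (c - η x) * h x) μ := by
    intro h hm hb
    apply integrable_of_bdd μ _ ((measurable_const.sub hη).mul hm) 1
    intro x
    have h1 : |c - η x| ≤ 1 := by
      rcases hc with ⟨hc0, hc1⟩; rcases hηb x with ⟨h0, h1⟩
      rw [abs_le]; constructor <;> linarith
    calc ‖(c - η x) * h x‖ = |c - η x| * |h x| := by rw [norm_mul]; rfl
      _ ≤ 1 * 1 := mul_le_mul h1 (habs h hb x) (abs_nonneg _) zero_le_one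
      _ = 1 := one_mul 1
  have kint2 : ∀ (h : X → ℝ), Measurable h → (∀ x, h x ∈ Set.Icc (0:ℝ) 1) →
      Integrable (fun x => (η x / π) * (cbar - ηEO x) * h x) μ := by
    intro h hm hb
    apply integrable_of_bdd μ _ (((hη.div_const π).mul (measurable_const.sub hηEO)).mul hm) π⁻¹
    intro x
    have h2 : |η x / π| ≤ π⁻¹ := by
      rw [abs_div, abs_of_pos hπ, div_le_iff₀ hπ]
      rcases hηb x with ⟨h0, h1⟩
      rw [abs_of_nonneg h0, inv_mul_cancel₀ (ne_of_gt hπ)]; exact h1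
    have h3 : |cbar - ηEO x| ≤ 1 := by
      rcases hcbar with ⟨hc0, hc1⟩; rcases hηEOb x with ⟨h0, h1⟩
      rw [abs_le]; constructor <;> linarith
    calc ‖η x / π * (cbar - ηEO x) * h x‖ = |η x / π| * |cbar - ηEO x| * |h x| := by
          rw [norm_mul, norm_mul]; rfl
      _ ≤ π⁻¹ * 1 * 1 := by
          apply mul_le_mul _ (habs h hb x) (abs_nonneg _) (by positivity)
          exact mul_le_mul h2 h3 (abs_nonneg _) (by positivity)
      _ = π⁻¹ := by ring
  -- combine integrals
  have hsplit : ∀ (h : X → ℝ), Measurable h → (∀ x, h x ∈ Set.Icc (0:ℝ) 1) →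
      ∫ x, g x * h x ∂μ =
        (∫ x, (c - η x) * h x ∂μ) - lam * ∫ x, (η x / π) * (cbar - ηEO x) * h x ∂μ := by
    intro h hm hb
    have : ∀ x, g x * h x = (c - η x) * h x - lam * ((η x / π) * (cbar - ηEO x) * h x) := by
      intro x; simp only [hg]; ring
    rw [integral_congr_ae (ae_of_all _ this),
      integral_sub (kint1 h hm hb) ((kint2 h hm hb).const_mul lam), integral_const_mul]
  rw [← hsplit fstar hfstar hfstarb, ← hsplit f hf hfb]
  apply integral_mono (key fstar hfstar hfstarb) (key f hf hfb)
  intro x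
  show g x * fstar x ≤ g x * f x
  have hs : (1 - lam * π⁻¹ * (ηEO x - cbar)) * η x - c = -g x := by
    simp only [hg]; field_simp; ring
  rcases lt_trichotomy (g x) 0 with hgx | hgx | hgx
  · have h1 : fstar x = 1 := hthr1 x (by rw [hs]; linarith)
    rw [h1]
    have := (hfb x).2
    nlinarith
  · simp [hgx]
  · have h0 : fstar x = 0 := hthr0 x (by rw [hs]; linarith)
    rw [h0]
    have := (hfb x).1
    nlinarith
end

section
/- Let FNR, FPR ∈ [0,1] with FNR ≠ 1, DI = FPR/(1-FNR), BER = (FPR+FNR)/2. Then for any τ ∈ (0,1], DI ≤ τ if and only if BER ≤ min(τ/2 + ((1-τ)/2)·FNR, 1/2 - ((1-τ)/(2τ))·FPR). -/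
theorem stmt_13 (FNR FPR τ : ℝ)
    (hFNR : FNR ∈ Set.Icc (0:ℝ) 1) (hFPR : FPR ∈ Set.Icc (0:ℝ) 1)
    (hFNR1 : FNR ≠ 1) (hτ : τ ∈ Set.Ioc (0:ℝ) 1) :
    FPR / (1 - FNR) ≤ τ ↔
      (FPR + FNR) / 2 ≤
        min (τ / 2 + (1 - τ) / 2 * FNR) (1 / 2 - (1 - τ) / (2 * τ) * FPR) := by
  obtain ⟨hF0, hF1⟩ := hFNR
  have ha : (0:ℝ) < 1 - FNR := lt_of_le_of_ne (by linarith) (by intro h; apply hFNR1; linarith)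
  have hτ0 : 0 < τ := hτ.1
  rw [div_le_iff₀ ha, le_min_iff]
  constructor
  · intro h
    constructor
    · nlinarith
    · have hq : FPR / τ ≤ 1 - FNR := (div_le_iff₀ hτ0).mpr (by nlinarith)
      have he : (1 - τ) / (2 * τ) * FPR = FPR / τ / 2 - FPR / 2 := by
        field_simp
      linarith
  · rintro ⟨h1, h2⟩
    nlinarith
end

section
/- Let FNR, FPR ∈ [0,1] with FNR ≠ 1, DI = FPR/(1-FNR), BER = (FPR+FNR)/2. For any ε ∈ [0,1/2]: BER ≤ ε if and only if DI ≤ min(FPR/(1 - 2ε + FPR), (2ε - FNR)/(1 - FNR)), provided 1 - 2ε + FPR > 0. -/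
theorem stmt_14 (FNR FPR ε : ℝ)
    (hFNR : FNR ∈ Set.Icc (0:ℝ) 1) (hFPR : FPR ∈ Set.Icc (0:ℝ) 1)
    (hFNR1 : FNR ≠ 1) (hε : ε ∈ Set.Icc (0:ℝ) (1/2))
    (hden : 1 - 2 * ε + FPR > 0) :
    (FPR + FNR) / 2 ≤ ε ↔
      FPR / (1 - FNR) ≤
        min (FPR / (1 - 2 * ε + FPR)) ((2 * ε - FNR) / (1 - FNR)) := by
  have h1 : (0:ℝ) < 1 - FNR := sub_pos.mpr (lt_of_le_of_ne hFNR.2 hFNR1)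
  constructor
  · intro h
    have h2 : FPR + FNR ≤ 2 * ε := by linarith
    refine le_min ?_ ?_
    · rw [div_le_div_iff₀ h1 hden]
      nlinarith [hFPR.1]
    · rw [div_le_div_iff₀ h1 h1]
      nlinarith
  · intro h
    have h3 := h.trans (min_le_right _ _)
    rw [div_le_div_iff₀ h1 h1] at h3
    nlinarith
end

section
/- Let η̄, η ∈ [0,1] and c, c̄ ∈ [0,1]. Define B(η̄, η) = |η̄ - c̄| · 1{(η̄ - c̄)·(η - c) < 0}. Then if f(η) = 1{η > c}, the quantity (1-c̄)·η̄·(1 - f(η)) + c̄·(1-η̄)·f(η) - min((1-c̄)·η̄, c̄·(1-η̄)) equals |η̄ - c̄| · 1{(η̄ - c̄)·(η - c) < 0} whenever η ≠ c. -/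
theorem stmt_17 (ηbar η c cbar : ℝ)
    (hηbar : ηbar ∈ Set.Icc (0:ℝ) 1) (hη : η ∈ Set.Icc (0:ℝ) 1)
    (hc : c ∈ Set.Icc (0:ℝ) 1) (hcbar : cbar ∈ Set.Icc (0:ℝ) 1)
    (hne : η ≠ c) :
    (1 - cbar) * ηbar * (1 - (if η > c then (1:ℝ) else 0)) +
        cbar * (1 - ηbar) * (if η > c then (1:ℝ) else 0) -
        min ((1 - cbar) * ηbar) (cbar * (1 - ηbar)) =
      |ηbar - cbar| * (if (ηbar - cbar) * (η - c) < 0 then (1:ℝ) else 0) := by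
  rcases lt_or_gt_of_ne hne with h | h <;>
  rcases le_or_gt ηbar cbar with hb | hb
  · rw [if_neg (not_lt.2 h.le), if_neg (by nlinarith),
      min_eq_left (by nlinarith), abs_of_nonpos (by linarith)]
    ring
  · rw [if_neg (not_lt.2 h.le), if_pos (by nlinarith),
      min_eq_right (by nlinarith), abs_of_pos (by linarith)]
    ring
  · rcases hb.lt_or_eq with hb' | hb'
    · rw [if_pos h, if_pos (by nlinarith),
        min_eq_left (by nlinarith), abs_of_nonpos (by linarith)]
      ring
    · rw [if_pos h, if_neg (by rw [hb']; simp),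
        min_eq_left (by nlinarith), hb']
      simp
      ring
  · rw [if_pos h, if_neg (by nlinarith),
      min_eq_right (by nlinarith), abs_of_pos (by linarith)]
    ring
end

section
/- Let X be a measurable space with probability measure M, η, η̄: X → [0,1] measurable, c, c̄ ∈ [0,1], λ ∈ ℝ. Let f*(x) = 1{η(x) - c - λ·(η̄(x) - c̄) > 0}. Assume M({x : η(x) = c}) = 0 and M({x : η(x) - c = λ·(η̄(x) - c̄)}) = 0. Then E[(c - η(X))·(f*(X) - 1{η(X) > c})] = E[|η(X) - c| · 1{(η(X) - c)·(η(X) - c - λ·(η̄(X) - c̄)) < 0}]. -/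
open MeasureTheory

theorem stmt_18 {X : Type*} [MeasurableSpace X] (μ : Measure X) [IsProbabilityMeasure μ]
    (η ηbar : X → ℝ) (c cbar lam : ℝ)
    (hη : Measurable η) (hηb : ∀ x, η x ∈ Set.Icc (0:ℝ) 1)
    (hηbar : Measurable ηbar) (hηbarb : ∀ x, ηbar x ∈ Set.Icc (0:ℝ) 1)
    (hc : c ∈ Set.Icc (0:ℝ) 1) (hcbar : cbar ∈ Set.Icc (0:ℝ) 1)
    (hnull1 : μ {x | η x = c} = 0)
    (hnull2 : μ {x | η x - c = lam * (ηbar x - cbar)} = 0) :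
    ∫ x, (c - η x) *
        ((if η x - c - lam * (ηbar x - cbar) > 0 then (1:ℝ) else 0) -
          (if η x > c then (1:ℝ) else 0)) ∂μ =
      ∫ x, |η x - c| *
        (if (η x - c) * (η x - c - lam * (ηbar x - cbar)) < 0 then (1:ℝ) else 0) ∂μ := by
  apply integral_congr_ae
  have h1 : ∀ᵐ x ∂μ, η x ≠ c := by
    rw [MeasureTheory.ae_iff]; simpa using hnull1
  have h2 : ∀ᵐ x ∂μ, η x - c ≠ lam * (ηbar x - cbar) := by
    rw [MeasureTheory.ae_iff]; simpa using hnull2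
  filter_upwards [h1, h2] with x hx1 hx2
  set a := η x - c with ha
  set b := η x - c - lam * (ηbar x - cbar) with hb
  have ha0 : a ≠ 0 := sub_ne_zero.mpr hx1
  have hb0 : b ≠ 0 := sub_ne_zero.mpr hx2
  have hca : c - η x = -a := by ring
  rw [hca]
  rcases lt_or_gt_of_ne ha0 with haneg | hapos <;>
    rcases lt_or_gt_of_ne hb0 with hbneg | hbpos
  · rw [if_neg (by linarith), if_neg (by simp [ha] at haneg; linarith),
      if_neg (by nlinarith)]; ring
  · rw [if_pos hbpos, if_neg (by simp [ha] at haneg; linarith),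
      if_pos (by nlinarith), abs_of_neg haneg]; ring
  · rw [if_neg (by linarith), if_pos (by simp [ha] at hapos; linarith),
      if_pos (by nlinarith), abs_of_pos hapos]; ring
  · rw [if_pos hbpos, if_pos (by simp [ha] at hapos; linarith),
      if_neg (by nlinarith)]; ring
end
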